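/- arXiv:2105.11815 — 6 statements merged into one kernel-verified Lean document; each statement's English description precedes it below -/
import Mathlib

section
/- Let A ∈ ℝ^{n×d} and y = Ax for some x ∈ ℝ^d. Then the non-uniformity of y satisfies ν(y) ≤ μ(A), i.e., ‖y‖_∞ / ‖y‖₂ ≤ μ(A) (for y ≠ 0). -/
/-! Write `A = U Σ Vᵀ` and `z = Σ Vᵀ x`, so that `y = U z`. Since `U` has orthonormal columns,
`‖y‖₂ = ‖z‖₂`, while Cauchy–Schwarz on the `i`-th row gives `|y i| ≤ ‖U i‖₂ ‖z‖₂ ≤ μ ‖y‖₂`. -/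

open Matrix BigOperators

namespace Matrix

variable {m k : Type*} [Fintype k]

theorem sum_sq_mulVec_of_transpose_mul_self_eq_one [Fintype m] [DecidableEq k] {U : Matrix m k ℝ}
    (hU : Uᵀ * U = 1) (z : k → ℝ) : ∑ i, (U *ᵥ z) i ^ 2 = ∑ j, z j ^ 2 := by
  simp only [sq]
  change (U *ᵥ z) ⬝ᵥ (U *ᵥ z) = z ⬝ᵥ z
  rw [dotProduct_mulVec, ← mulVec_transpose, mulVec_mulVec, hU, one_mulVec]

theorem abs_mulVec_apply_le (U : Matrix m k ℝ) (z : k → ℝ) (i : m) :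
    |(U *ᵥ z) i| ≤ √(∑ j, U i j ^ 2) * √(∑ j, z j ^ 2) := by
  rw [← Real.sqrt_mul (Finset.sum_nonneg fun j _ => sq_nonneg _), ← Real.sqrt_sq_eq_abs]
  exact Real.sqrt_le_sqrt (Finset.sum_mul_sq_le_sq_mul_sq _ _ _)

theorem iSup_abs_mulVec_le [Fintype m] [DecidableEq k] {U : Matrix m k ℝ} (hU : Uᵀ * U = 1) {μ : ℝ}
    (hμ : ∀ i, √(∑ j, U i j ^ 2) ≤ μ) (hμ0 : 0 ≤ μ) (z : k → ℝ) :
    ⨆ i, |(U *ᵥ z) i| ≤ μ * √(∑ i, (U *ᵥ z) i ^ 2) := by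
  rw [sum_sq_mulVec_of_transpose_mul_self_eq_one hU]
  refine Real.iSup_le (fun i => ?_) (by positivity)
  exact (abs_mulVec_apply_le U z i).trans
    (mul_le_mul_of_nonneg_right (hμ i) (Real.sqrt_nonneg _))

end Matrix

theorem stmt_4_general {n d r : ℕ} (A : Matrix (Fin n) (Fin d) ℝ)
    (U : Matrix (Fin n) (Fin r) ℝ) (σ : Fin r → ℝ) (V : Matrix (Fin d) (Fin r) ℝ)
    (hU : Uᵀ * U = 1)
    (hA : A = U * Matrix.diagonal σ * Vᵀ)
    (μ : ℝ)
    (hμ : IsGreatest {x : ℝ | ∃ i : Fin n, x = Real.sqrt (∑ j, (U i j) ^ 2)} μ)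
    (x : Fin d → ℝ) (y : Fin n → ℝ) (hy : y = A.mulVec x) :
    (⨆ i : Fin n, |y i|) / Real.sqrt (∑ i, (y i) ^ 2) ≤ μ := by
  obtain ⟨⟨i₀, rfl⟩, hμ_ub⟩ := hμ
  have hy_eq : y = U *ᵥ ((diagonal σ * Vᵀ) *ᵥ x) := by
    rw [hy, hA, Matrix.mul_assoc, mulVec_mulVec]
  subst hy_eq
  exact div_le_of_le_mul₀ (Real.sqrt_nonneg _) (Real.sqrt_nonneg _)
    (iSup_abs_mulVec_le hU (fun i => hμ_ub ⟨i, rfl⟩) (Real.sqrt_nonneg _) _)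

theorem stmt_4 {n d r : ℕ} (A : Matrix (Fin n) (Fin d) ℝ)
    (U : Matrix (Fin n) (Fin r) ℝ) (σ : Fin r → ℝ) (V : Matrix (Fin d) (Fin r) ℝ)
    (hU : Uᵀ * U = 1) (hV : Vᵀ * V = 1) (hσ : ∀ i, 0 < σ i)
    (hA : A = U * Matrix.diagonal σ * Vᵀ)
    (μ : ℝ)
    (hμ : IsGreatest {x : ℝ | ∃ i : Fin n, x = Real.sqrt (∑ j, (U i j) ^ 2)} μ)
    (x : Fin d → ℝ) (y : Fin n → ℝ) (hy : y = A.mulVec x) (hy0 : y ≠ 0) :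
    (⨆ i : Fin n, |y i|) / Real.sqrt (∑ i, (y i) ^ 2) ≤ μ :=
  stmt_4_general A U σ V hU hA μ hμ x y hy
end

section
/- Let ε, γ ∈ (0,1), U ∈ ℝ^{n×r} with orthonormal columns, M = {Uz : ‖z‖₂ = 1}, and N a γ-cover of M. If S ∈ ℝ^{m×n} is a generalised ε₁-JL embedding for N with ε₁ = ε(1−γ)(1−γ²)/(1+2γ−γ²), then S is an ε-JL embedding for M. -/
open Matrix BigOperators

/-!
Put `B x y = ⟪S x, S y⟫ - ⟪x, y⟫`, a symmetric bilinear form with `|B| ≤ ε₁` on the net `N`.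
Since `M` is the unit sphere of the column space of `U`, every `v ∈ M` splits as `v = w + t • u`
with `w ∈ N`, `u ∈ M` and `0 ≤ t ≤ γ`. For the suprema `C` of `|B w v|` over `N × M` and `A` of
`|B v v|` over `M` (finite because `M` is bounded) the splitting gives `C ≤ ε₁ + γ C` and
`A ≤ ε₁ + 2 γ C + γ² A`, whence `A ≤ ε₁ / (1 - γ)²`, which is at most `ε` for the given `ε₁`.
-/

lemma le_div_one_sub_of_le_add_mul_csSup {s : Set ℝ} (hs : BddAbove s) {a c : ℝ} (hc : c < 1)
    (h : ∀ x ∈ s, x ≤ a + c * sSup s) {x : ℝ} (hx : x ∈ s) : x ≤ a / (1 - c) := by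
  have hsup : sSup s ≤ a + c * sSup s := csSup_le ⟨x, hx⟩ h
  rw [le_div_iff₀ (by linarith)]
  nlinarith [le_csSup hs hx]

section Chaining

variable {E : Type*} [AddCommGroup E] [Module ℝ E] {B : LinearMap.BilinForm ℝ E}
  {M N : Set E} {γ ε₁ K : ℝ}

theorem abs_bilinForm_apply_le_of_decomp (hNM : N ⊆ M) (hγ : γ < 1)
    (hdecomp : ∀ v ∈ M, ∃ w ∈ N, ∃ t ∈ Set.Icc 0 γ, ∃ u ∈ M, v = w + t • u)
    (hnet : ∀ w ∈ N, ∀ w' ∈ N, |B w w'| ≤ ε₁) (hbdd : ∀ v ∈ M, ∀ v' ∈ M, |B v v'| ≤ K)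
    {w v : E} (hw : w ∈ N) (hv : v ∈ M) : |B w v| ≤ ε₁ / (1 - γ) := by
  set s := Set.image2 (fun w v => |B w v|) N M
  have hs : BddAbove s := ⟨K, by rintro _ ⟨w, hw, v, hv, rfl⟩; exact hbdd w (hNM hw) v hv⟩
  refine le_div_one_sub_of_le_add_mul_csSup hs hγ ?_ (Set.mem_image2_of_mem hw hv)
  rintro _ ⟨w, hw, v, hv, rfl⟩
  obtain ⟨w', hw', t, ⟨ht0, htγ⟩, u, hu, rfl⟩ := hdecomp v hv
  have hwu : |B w u| ≤ sSup s := le_csSup hs (Set.mem_image2_of_mem hw hu)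
  calc |B w (w' + t • u)| = |B w w' + t * B w u| := by simp
    _ ≤ |B w w'| + t * |B w u| := by
        rw [← abs_of_nonneg ht0, ← abs_mul, abs_of_nonneg ht0]; exact abs_add_le _ _
    _ ≤ ε₁ + γ * sSup s := by
        gcongr
        exacts [hnet w hw w' hw', ht0.trans htγ]

theorem abs_bilinForm_apply_self_le_of_decomp (hB : B.IsSymm) (hNM : N ⊆ M) (hγ : γ < 1)
    (hdecomp : ∀ v ∈ M, ∃ w ∈ N, ∃ t ∈ Set.Icc 0 γ, ∃ u ∈ M, v = w + t • u)
    (hnet : ∀ w ∈ N, ∀ w' ∈ N, |B w w'| ≤ ε₁) (hbdd : ∀ v ∈ M, ∀ v' ∈ M, |B v v'| ≤ K)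
    {v : E} (hv : v ∈ M) : |B v v| ≤ ε₁ / (1 - γ) ^ 2 := by
  obtain ⟨-, -, t, ⟨ht0, htγ⟩, -⟩ := hdecomp v hv
  have hγ0 : 0 ≤ γ := ht0.trans htγ
  set s := (fun v => |B v v|) '' M
  have hs : BddAbove s := ⟨K, by rintro _ ⟨v, hv, rfl⟩; exact hbdd v hv v hv⟩
  have hrec : ∀ x ∈ s, x ≤ (ε₁ + 2 * γ * (ε₁ / (1 - γ))) + γ ^ 2 * sSup s := by
    rintro _ ⟨v, hv, rfl⟩
    obtain ⟨w, hw, t, ⟨ht0, htγ⟩, u, hu, rfl⟩ := hdecomp v hv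
    have hwu := abs_bilinForm_apply_le_of_decomp hNM hγ hdecomp hnet hbdd hw hu
    have huu : |B u u| ≤ sSup s := le_csSup hs ⟨u, hu, rfl⟩
    have hexpand : B (w + t • u) (w + t • u) = B w w + 2 * t * B w u + t ^ 2 * B u u := by
      simp [hB.eq u w]; ring
    have ht2 : t ^ 2 ≤ γ ^ 2 := pow_le_pow_left₀ ht0 htγ 2
    calc |B (w + t • u) (w + t • u)| ≤ |B w w| + 2 * t * |B w u| + t ^ 2 * |B u u| := by
          rw [hexpand]
          refine (abs_add_le _ _).trans (add_le_add ((abs_add_le _ _).trans ?_) ?_) <;>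
            simp [abs_mul, abs_of_nonneg ht0, mul_assoc]
      _ ≤ ε₁ + 2 * γ * (ε₁ / (1 - γ)) + γ ^ 2 * sSup s := by
          gcongr
          exact hnet w hw w hw
  have h1 : 1 - γ ≠ 0 := by linarith
  have h2 : 1 - γ ^ 2 ≠ 0 := by nlinarith
  calc |B v v| ≤ (ε₁ + 2 * γ * (ε₁ / (1 - γ))) / (1 - γ ^ 2) :=
        le_div_one_sub_of_le_add_mul_csSup hs (by nlinarith) hrec ⟨v, hv, rfl⟩
    _ = ε₁ / (1 - γ) ^ 2 := by
        field_simp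
        ring

end Chaining


section Matrix

variable {ι κ : Type*} [Fintype ι] [Fintype κ]

lemma sum_sq_eq_dotProduct_self (v : ι → ℝ) : ∑ i, v i ^ 2 = v ⬝ᵥ v := by
  simp [dotProduct, sq]

lemma mulVec_dotProduct_mulVec_of_transpose_mul_self_eq_one [DecidableEq κ] {U : Matrix ι κ ℝ}
    (hU : Uᵀ * U = 1) (x y : κ → ℝ) : U *ᵥ x ⬝ᵥ U *ᵥ y = x ⬝ᵥ y := by
  rw [dotProduct_mulVec, ← mulVec_transpose, mulVec_mulVec, hU, one_mulVec]

lemma mulVec_dotProduct_self_eq_one [DecidableEq κ] {U : Matrix ι κ ℝ} (hU : Uᵀ * U = 1)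
    {z : κ → ℝ} (hz : ∑ i, z i ^ 2 = 1) : U *ᵥ z ⬝ᵥ U *ᵥ z = 1 := by
  rw [mulVec_dotProduct_mulVec_of_transpose_mul_self_eq_one hU, ← sum_sq_eq_dotProduct_self, hz]

lemma toBilin'_transpose_mul_self_sub_one_apply [DecidableEq κ] (S : Matrix ι κ ℝ)
    (x y : κ → ℝ) : (Sᵀ * S - 1).toBilin' x y = S *ᵥ x ⬝ᵥ S *ᵥ y - x ⬝ᵥ y := by
  rw [toBilin'_apply', sub_mulVec, one_mulVec, dotProduct_sub, ← mulVec_mulVec,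
    dotProduct_mulVec, vecMul_transpose]

lemma isSymm_toBilin'_transpose_mul_self_sub_one [DecidableEq κ] (S : Matrix ι κ ℝ) :
    (Sᵀ * S - 1).toBilin'.IsSymm :=
  ⟨fun x y => by simp only [toBilin'_transpose_mul_self_sub_one_apply, dotProduct_comm]⟩

lemma sq_dotProduct_mulVec_le (A : Matrix ι κ ℝ) (x : ι → ℝ) (y : κ → ℝ) :
    (x ⬝ᵥ A *ᵥ y) ^ 2 ≤ (x ⬝ᵥ x) * (∑ i, ∑ j, A i j ^ 2) * (y ⬝ᵥ y) := by
  have hrow : ∀ i, (A *ᵥ y) i ^ 2 ≤ (∑ j, A i j ^ 2) * (y ⬝ᵥ y) := fun i => by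
    rw [← sum_sq_eq_dotProduct_self]
    exact Finset.sum_mul_sq_le_sq_mul_sq _ _ _
  calc (x ⬝ᵥ A *ᵥ y) ^ 2 ≤ (x ⬝ᵥ x) * ∑ i, (A *ᵥ y) i ^ 2 := by
        rw [← sum_sq_eq_dotProduct_self x]
        exact Finset.sum_mul_sq_le_sq_mul_sq _ x (A *ᵥ y)
    _ ≤ (x ⬝ᵥ x) * ∑ i, (∑ j, A i j ^ 2) * (y ⬝ᵥ y) := by
        gcongr with i
        · simpa using dotProduct_star_self_nonneg x
        · exact hrow i
    _ = _ := by rw [← Finset.sum_mul, mul_assoc]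

lemma abs_toBilin'_apply_le_of_dotProduct_self_eq_one [DecidableEq κ] (A : Matrix κ κ ℝ)
    {x y : κ → ℝ} (hx : x ⬝ᵥ x = 1) (hy : y ⬝ᵥ y = 1) :
    |A.toBilin' x y| ≤ √(∑ i, ∑ j, A i j ^ 2) := by
  refine Real.abs_le_sqrt ?_
  simpa [toBilin'_apply', hx, hy] using sq_dotProduct_mulVec_le A x y

lemma exists_eq_add_smul_of_sqrt_le [DecidableEq κ] {U : Matrix ι κ ℝ} (hU : Uᵀ * U = 1)
    {z₁ z₂ : κ → ℝ} (hz₁ : ∑ i, z₁ i ^ 2 = 1) {γ : ℝ}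
    (hγ : √(∑ i, ((U *ᵥ z₁) i - (U *ᵥ z₂) i) ^ 2) ≤ γ) :
    ∃ t ∈ Set.Icc 0 γ, ∃ z : κ → ℝ, ∑ i, z i ^ 2 = 1 ∧ U *ᵥ z₁ = U *ᵥ z₂ + t • U *ᵥ z := by
  set d := z₁ - z₂
  have hdist : ∑ i, ((U *ᵥ z₁) i - (U *ᵥ z₂) i) ^ 2 = d ⬝ᵥ d := by
    rw [← mulVec_dotProduct_mulVec_of_transpose_mul_self_eq_one hU, mulVec_sub,
      ← sum_sq_eq_dotProduct_self]
    rfl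
  rw [hdist] at hγ
  have ht0 : 0 ≤ √(d ⬝ᵥ d) := Real.sqrt_nonneg _
  rcases eq_or_ne d 0 with hd | hd
  · refine ⟨0, ⟨le_rfl, ht0.trans hγ⟩, z₁, hz₁, ?_⟩
    rw [sub_eq_zero.1 hd, zero_smul, add_zero]
  · have hdd : 0 < d ⬝ᵥ d := by simpa using dotProduct_star_self_pos_iff.2 hd
    refine ⟨√(d ⬝ᵥ d), ⟨ht0, hγ⟩, (√(d ⬝ᵥ d))⁻¹ • d, ?_, ?_⟩
    · rw [sum_sq_eq_dotProduct_self, smul_dotProduct, dotProduct_smul, smul_eq_mul, smul_eq_mul,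
        ← mul_assoc, ← sq, inv_pow, Real.sq_sqrt hdd.le, inv_mul_cancel₀ hdd.ne']
    · rw [mulVec_smul, smul_smul, mul_inv_cancel₀ (Real.sqrt_pos.2 hdd).ne', one_smul, ← mulVec_add,
        add_sub_cancel]

end Matrix

theorem stmt_10_general {m n r : ℕ} (ε γ : ℝ) (hε0 : 0 < ε)
    (hγ0 : 0 < γ) (hγ1 : γ < 1)
    (U : Matrix (Fin n) (Fin r) ℝ) (hU : Uᵀ * U = 1)
    (M : Set (Fin n → ℝ))
    (hM : M = {y | ∃ z : Fin r → ℝ, ∑ i, (z i) ^ 2 = 1 ∧ y = U.mulVec z})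
    (N : Set (Fin n → ℝ)) (hNM : N ⊆ M)
    (hcover : ∀ y ∈ M, ∃ w ∈ N, Real.sqrt (∑ i, (y i - w i) ^ 2) ≤ γ)
    (S : Matrix (Fin m) (Fin n) ℝ)
    (hgen : ∀ y₁ ∈ N, ∀ y₂ ∈ N,
      |(∑ i, S.mulVec y₁ i * S.mulVec y₂ i) - ∑ i, y₁ i * y₂ i| ≤
        (ε * (1 - γ) * (1 - γ ^ 2) / (1 + 2 * γ - γ ^ 2)) *
          Real.sqrt (∑ i, (y₁ i) ^ 2) * Real.sqrt (∑ i, (y₂ i) ^ 2)) :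
    ∀ y ∈ M,
      (1 - ε) * ∑ i, (y i) ^ 2 ≤ ∑ i, (S.mulVec y i) ^ 2 ∧
      ∑ i, (S.mulVec y i) ^ 2 ≤ (1 + ε) * ∑ i, (y i) ^ 2 := by
  set ε₁ := ε * (1 - γ) * (1 - γ ^ 2) / (1 + 2 * γ - γ ^ 2)
  set B := (Sᵀ * S - 1).toBilin'
  have hB : ∀ x y, B x y = S *ᵥ x ⬝ᵥ S *ᵥ y - x ⬝ᵥ y :=
    toBilin'_transpose_mul_self_sub_one_apply S
  have hunit : ∀ v ∈ M, v ⬝ᵥ v = 1 := by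
    rintro _ hv
    obtain ⟨z, hz, rfl⟩ := hM ▸ hv
    exact mulVec_dotProduct_self_eq_one hU hz
  have hnet : ∀ w ∈ N, ∀ w' ∈ N, |B w w'| ≤ ε₁ := fun w hw w' hw' => by
    have h := hgen w hw w' hw'
    rw [sum_sq_eq_dotProduct_self, sum_sq_eq_dotProduct_self, hunit w (hNM hw),
      hunit w' (hNM hw'), Real.sqrt_one, mul_one, mul_one] at h
    rw [hB]
    exact h
  have hbdd : ∀ v ∈ M, ∀ v' ∈ M, |B v v'| ≤ √(∑ i, ∑ j, (Sᵀ * S - 1 : Matrix _ _ ℝ) i j ^ 2) :=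
    fun v hv v' hv' => abs_toBilin'_apply_le_of_dotProduct_self_eq_one _ (hunit v hv) (hunit v' hv')
  have hdecomp : ∀ v ∈ M, ∃ w ∈ N, ∃ t ∈ Set.Icc 0 γ, ∃ u ∈ M, v = w + t • u := by
    intro v hv
    obtain ⟨w, hw, hvw⟩ := hcover v hv
    obtain ⟨z₁, hz₁, rfl⟩ := hM ▸ hv
    obtain ⟨z₂, -, rfl⟩ := hM ▸ hNM hw
    obtain ⟨t, ht, z, hz, hsplit⟩ := exists_eq_add_smul_of_sqrt_le hU hz₁ hvw
    exact ⟨_, hw, t, ht, U *ᵥ z, hM ▸ ⟨z, hz, rfl⟩, hsplit⟩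
  intro y hy
  have herr := abs_bilinForm_apply_self_le_of_decomp (isSymm_toBilin'_transpose_mul_self_sub_one S)
    hNM hγ1 hdecomp hnet hbdd hy
  have hε₁ : ε₁ / (1 - γ) ^ 2 ≤ ε := by
    have h1 : 0 < 1 - γ := by linarith
    rw [div_le_iff₀ (by positivity), div_le_iff₀ (by nlinarith)]
    nlinarith [mul_pos (mul_pos hε0 hγ0) (pow_pos h1 3)]
  rw [hB, hunit y hy] at herr
  rw [sum_sq_eq_dotProduct_self, sum_sq_eq_dotProduct_self, hunit y hy]
  constructor <;> linarith [abs_le.1 (herr.trans hε₁)]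

theorem stmt_10 {m n r : ℕ} (ε γ : ℝ) (hε0 : 0 < ε) (hε1 : ε < 1)
    (hγ0 : 0 < γ) (hγ1 : γ < 1)
    (U : Matrix (Fin n) (Fin r) ℝ) (hU : Uᵀ * U = 1)
    (M : Set (Fin n → ℝ))
    (hM : M = {y | ∃ z : Fin r → ℝ, ∑ i, (z i) ^ 2 = 1 ∧ y = U.mulVec z})
    (N : Set (Fin n → ℝ)) (hNM : N ⊆ M)
    (hcover : ∀ y ∈ M, ∃ w ∈ N, Real.sqrt (∑ i, (y i - w i) ^ 2) ≤ γ)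
    (S : Matrix (Fin m) (Fin n) ℝ)
    (hgen : ∀ y₁ ∈ N, ∀ y₂ ∈ N,
      |(∑ i, S.mulVec y₁ i * S.mulVec y₂ i) - ∑ i, y₁ i * y₂ i| ≤
        (ε * (1 - γ) * (1 - γ ^ 2) / (1 + 2 * γ - γ ^ 2)) *
          Real.sqrt (∑ i, (y₁ i) ^ 2) * Real.sqrt (∑ i, (y₂ i) ^ 2)) :
    ∀ y ∈ M,
      (1 - ε) * ∑ i, (y i) ^ 2 ≤ ∑ i, (S.mulVec y i) ^ 2 ∧
      ∑ i, (S.mulVec y i) ^ 2 ≤ (1 + ε) * ∑ i, (y i) ^ 2 :=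
  stmt_10_general ε γ hε0 hγ0 hγ1 U hU M hM N hNM hcover S hgen
end

section
/- Consider the matrix A ∈ ℝ^{n×d} whose top-left r×r block is the identity and all other entries are zero. If S ∈ ℝ^{m×n} is a random 1-hashing matrix, then the probability that rank(SA) = r is at most e^{−r(r−1)/(2m)}. Consequently, for this probability to be at least 1/2, one must have m ≥ r(r−1)/(2 log 2). -/
/-!
Column `j` of a 1-hashing matrix `S` is `±e_{h j}`, and `S * A` consists of the first `r` columns
of `S` followed by zeros. So `rank (S * A) = r` forces `e_{h 0}, …, e_{h (r-1)}` to be linearly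
independent, i.e. `h` to be injective on the first `r` indices. That is the birthday event, of
probability `m (m - 1) ⋯ (m - r + 1) / m ^ r`, and
`∏_{i < r} (1 - i / m) ≤ ∏_{i < r} exp (-i / m) = exp (-r (r - 1) / (2 m))`.
-/

open Matrix BigOperators

open Function

open Finset Real in
theorem Nat.descFactorial_div_pow_le_exp (m r : ℕ) :
    (m.descFactorial r : ℝ) / m ^ r ≤ exp (-((r : ℝ) * ((r : ℝ) - 1)) / (2 * m)) := by
  have factor_le (i : ℕ) : ((m - i : ℕ) : ℝ) / m ≤ exp (-(i / m)) := by
    rcases le_or_gt m i with hmi | him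
    · rw [Nat.sub_eq_zero_of_le hmi, Nat.cast_zero, zero_div]
      exact (exp_pos _).le
    · have hm : (m : ℝ) ≠ 0 := Nat.cast_ne_zero.mpr (by omega)
      calc ((m - i : ℕ) : ℝ) / m = 1 - i / m := by
            rw [Nat.cast_sub him.le]; field_simp
        _ ≤ exp (-(i / m)) := one_sub_le_exp_neg _
  have gauss : ∑ i ∈ range r, (i : ℝ) = r * ((r : ℝ) - 1) / 2 := by
    induction r with
    | zero => simp
    | succ s ih => rw [sum_range_succ, ih]; push_cast; ring
  calc (m.descFactorial r : ℝ) / m ^ r = ∏ i ∈ range r, ((m - i : ℕ) : ℝ) / m := by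
        rw [Nat.descFactorial_eq_prod_range, prod_div_distrib, prod_const, Nat.cast_prod,
          card_range]
    _ ≤ ∏ i ∈ range r, exp (-(i / m)) :=
        prod_le_prod (fun _ _ => by positivity) fun i _ => factor_le i
    _ = exp (-((r : ℝ) * ((r : ℝ) - 1)) / (2 * m)) := by
        rw [← exp_sum, sum_neg_distrib, ← sum_div, gauss]; congr 1; ring

theorem Nat.card_injective_comp_castLE {α : Type*} [Finite α] {r n : ℕ} (hrn : r ≤ n) :
    Nat.card {f : Fin n → α // Injective fun t : Fin r => f (Fin.castLE hrn t)} =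
      (Nat.card α).descFactorial r * Nat.card α ^ (n - r) := by
  obtain ⟨k, rfl⟩ := Nat.exists_eq_add_of_le hrn
  let e : {f : Fin (r + k) → α // Injective fun t : Fin r => f (Fin.castLE hrn t)} ≃
      (Fin r ↪ α) × (Fin k → α) :=
    (Equiv.subtypeEquiv (Fin.appendEquiv r k).symm fun _ => Iff.rfl).trans <|
      Equiv.prodSubtypeFstEquivSubtypeProd.trans <|
        (Equiv.subtypeInjectiveEquivEmbedding _ _).prodCongr (Equiv.refl _)
  have := Fintype.ofFinite α
  rw [Nat.card_congr e, Nat.card_prod, Nat.card_eq_fintype_card, Fintype.card_embedding_eq]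
  simp

theorem Matrix.linearIndependent_of_card_le_rank_of_col_mem_span {K ι κ ν : Type*} [Field K]
    [Fintype ι] [Fintype ν] {M : Matrix κ ν K} {v : ι → κ → K}
    (hcol : ∀ j, M.col j ∈ Submodule.span K (Set.range v)) (hrank : Fintype.card ι ≤ M.rank) :
    LinearIndependent K v := by
  have := FiniteDimensional.span_of_finite K (Set.finite_range v)
  rw [linearIndependent_iff_card_le_finrank_span]
  calc Fintype.card ι ≤ M.rank := hrank
    _ = Module.finrank K (Submodule.span K (Set.range M.col)) := M.rank_eq_finrank_span_cols
    _ ≤ (Set.range v).finrank K :=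
        Submodule.finrank_mono (Submodule.span_le.mpr (Set.range_subset_iff.mpr hcol))

theorem Matrix.col_mul_mem_span_col_castLE {K κ : Type*} [Field K] {n d r : ℕ} (hrn : r ≤ n)
    (S : Matrix κ (Fin n) K) (A : Matrix (Fin n) (Fin d) K)
    (hA : ∀ i j, A i j = if (i : ℕ) = (j : ℕ) ∧ (i : ℕ) < r then 1 else 0) (j : Fin d) :
    (S * A).col j ∈ Submodule.span K (Set.range fun t : Fin r => S.col (Fin.castLE hrn t)) := by
  have hsum : (S * A).col j = ∑ k, A k j • S.col k := by
    ext i; simp [mul_apply, Finset.sum_apply, mul_comm]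
  rw [hsum]
  refine Submodule.sum_mem _ fun k _ => ?_
  rw [hA]
  split_ifs with hk
  · exact Submodule.smul_mem _ _ (Submodule.subset_span ⟨⟨k, hk.2⟩, rfl⟩)
  · rw [zero_smul]; exact Submodule.zero_mem _

def hashingMatrix (R : Type*) [Ring R] {ι κ : Type*} [DecidableEq κ] (h : ι → κ)
    (σ : ι → Bool) : Matrix κ ι R :=
  Matrix.of fun i j => if i = h j then (if σ j then 1 else -1) else 0

theorem hashingMatrix_col_mem_span (R : Type*) [Ring R] {ι κ : Type*} [DecidableEq κ]
    (h : ι → κ) (σ : ι → Bool) (j : ι) :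
    (hashingMatrix R h σ).col j ∈ Submodule.span R {Pi.single (h j) 1} := by
  rw [Submodule.mem_span_singleton]
  refine ⟨if σ j then 1 else -1, ?_⟩
  ext i
  by_cases hi : i = h j <;> simp [hashingMatrix, hi]

theorem injective_of_rank_hashingMatrix_mul_eq {K κ : Type*} [Field K] [DecidableEq κ]
    {n d r : ℕ} (hrn : r ≤ n) (h : Fin n → κ) (σ : Fin n → Bool)
    (A : Matrix (Fin n) (Fin d) K)
    (hA : ∀ i j, A i j = if (i : ℕ) = (j : ℕ) ∧ (i : ℕ) < r then 1 else 0)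
    (hrank : (hashingMatrix K h σ * A).rank = r) :
    Injective fun t : Fin r => h (Fin.castLE hrn t) := by
  set e : Fin r → κ → K := fun t => Pi.single (h (Fin.castLE hrn t)) 1
  have hspan : Submodule.span K (Set.range fun t : Fin r => (hashingMatrix K h σ).col
      (Fin.castLE hrn t)) ≤ Submodule.span K (Set.range e) := by
    refine Submodule.span_le.mpr (Set.range_subset_iff.mpr fun t => ?_)
    exact Submodule.span_mono (Set.singleton_subset_iff.mpr (Set.mem_range_self t))
      (hashingMatrix_col_mem_span K h σ _)
  have hli := linearIndependent_of_card_le_rank_of_col_mem_span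
    (fun j => hspan (col_mul_mem_span_col_castLE hrn _ A hA j)) (by simp [hrank])
  exact fun a c hac => hli.injective (congrArg (Pi.single · (1 : K)) hac)

open scoped ENNReal in
theorem PMF.toOuterMeasure_uniformOfFintype_injective_comp_castLE {β : Type*} [Fintype β]
    [Nonempty β] {n m r : ℕ} [NeZero m] (hrn : r ≤ n) :
    (PMF.uniformOfFintype ((Fin n → Fin m) × β)).toOuterMeasure
        {ω | Injective fun t : Fin r => ω.1 (Fin.castLE hrn t)} =
      (m.descFactorial r : ℝ≥0∞) / m ^ r := by
  have hcard : Nat.card {ω : (Fin n → Fin m) × β | Injective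
      fun t : Fin r => ω.1 (Fin.castLE hrn t)} = m.descFactorial r * m ^ (n - r) * Nat.card β := by
    refine (Nat.card_congr (Equiv.prodSubtypeFstEquivSubtypeProd
      (p := fun f : Fin n → Fin m => Injective fun t : Fin r => f (Fin.castLE hrn t)))).trans ?_
    rw [Nat.card_prod, Nat.card_injective_comp_castLE, Nat.card_eq_fintype_card,
      Fintype.card_fin]
  have hsplit : (m : ℝ≥0∞) ^ n = m ^ r * m ^ (n - r) := by
    rw [← pow_add, Nat.add_sub_cancel' hrn]
  rw [PMF.toOuterMeasure_uniformOfFintype_apply, ← Nat.card_eq_fintype_card, hcard,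
    Fintype.card_prod, Fintype.card_fun, Fintype.card_fin, Fintype.card_fin,
    ← Nat.card_eq_fintype_card]
  push_cast
  rw [hsplit, ENNReal.mul_div_mul_right _ _ (by simp) (by simp),
    ENNReal.mul_div_mul_right _ _ (by simp [NeZero.ne m]) (by simp)]

open Real in
theorem div_two_mul_log_two_le_of_half_le_exp {a b : ℝ} (hb : 0 < b)
    (h : 1 / 2 ≤ exp (-a / (2 * b))) : a / (2 * log 2) ≤ b := by
  have hlog : -log 2 ≤ -a / (2 * b) := by
    rwa [← log_le_iff_le_exp (by norm_num), one_div, log_inv] at h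
  rw [neg_div, neg_le_neg_iff, div_le_iff₀ (by positivity)] at hlog
  rw [div_le_iff₀ (by positivity)]
  linarith

theorem stmt_11_general {n m r d : ℕ} [NeZero m] (hrn : r ≤ n)
    (A : Matrix (Fin n) (Fin d) ℝ)
    (hA : ∀ i j, A i j = if (i : ℕ) = (j : ℕ) ∧ (i : ℕ) < r then 1 else 0) :
    (PMF.uniformOfFintype ((Fin n → Fin m) × (Fin n → Bool))).toOuterMeasure
        {ω | (Matrix.of (fun i j =>
          if i = ω.1 j then (if ω.2 j then (1 : ℝ) else -1) else 0) * A).rank = r}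
      ≤ ENNReal.ofReal (Real.exp (-((r : ℝ) * ((r : ℝ) - 1)) / (2 * m))) ∧
    (ENNReal.ofReal (1 / 2) ≤
        (PMF.uniformOfFintype ((Fin n → Fin m) × (Fin n → Bool))).toOuterMeasure
          {ω | (Matrix.of (fun i j =>
            if i = ω.1 j then (if ω.2 j then (1 : ℝ) else -1) else 0) * A).rank = r} →
      (r : ℝ) * ((r : ℝ) - 1) / (2 * Real.log 2) ≤ m) := by
  have hm : (0 : ℝ) < m := Nat.cast_pos.mpr (NeZero.pos m)
  set P := PMF.uniformOfFintype ((Fin n → Fin m) × (Fin n → Bool))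
  have hbound : P.toOuterMeasure {ω | (hashingMatrix ℝ ω.1 ω.2 * A).rank = r} ≤
      ENNReal.ofReal (Real.exp (-((r : ℝ) * ((r : ℝ) - 1)) / (2 * m))) :=
    calc _ ≤ P.toOuterMeasure {ω | Injective fun t : Fin r => ω.1 (Fin.castLE hrn t)} :=
          P.toOuterMeasure.mono fun ω hω => injective_of_rank_hashingMatrix_mul_eq hrn _ _ A hA hω
      _ = ENNReal.ofReal ((m.descFactorial r : ℝ) / m ^ r) := by
          rw [PMF.toOuterMeasure_uniformOfFintype_injective_comp_castLE,
            ENNReal.ofReal_div_of_pos (pow_pos hm r), ENNReal.ofReal_pow hm.le,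
            ENNReal.ofReal_natCast, ENNReal.ofReal_natCast]
      _ ≤ _ := ENNReal.ofReal_le_ofReal (Nat.descFactorial_div_pow_le_exp m r)
  refine ⟨hbound, fun hhalf => div_two_mul_log_two_le_of_half_le_exp hm ?_⟩
  exact (ENNReal.ofReal_le_ofReal_iff (Real.exp_pos _).le).mp (hhalf.trans hbound)

theorem stmt_11 {n m r d : ℕ} [NeZero m] (hrn : r ≤ n) (hrd : r ≤ d)
    (A : Matrix (Fin n) (Fin d) ℝ)
    (hA : ∀ i j, A i j = if (i : ℕ) = (j : ℕ) ∧ (i : ℕ) < r then 1 else 0) :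
    (PMF.uniformOfFintype ((Fin n → Fin m) × (Fin n → Bool))).toOuterMeasure
        {ω | (Matrix.of (fun i j =>
          if i = ω.1 j then (if ω.2 j then (1 : ℝ) else -1) else 0) * A).rank = r}
      ≤ ENNReal.ofReal (Real.exp (-((r : ℝ) * ((r : ℝ) - 1)) / (2 * m))) ∧
    (ENNReal.ofReal (1 / 2) ≤
        (PMF.uniformOfFintype ((Fin n → Fin m) × (Fin n → Bool))).toOuterMeasure
          {ω | (Matrix.of (fun i j =>
            if i = ω.1 j then (if ω.2 j then (1 : ℝ) else -1) else 0) * A).rank = r} →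
      (r : ℝ) * ((r : ℝ) - 1) / (2 * Real.log 2) ≤ m) :=
  stmt_11_general hrn A hA
end

section
/- An s-hashing variant matrix T ∈ ℝ^{m×n} is equal in distribution to (1/√s)(S⁽¹⁾ + S⁽²⁾ + ⋯ + S⁽ˢ⁾), where S⁽¹⁾,…,S⁽ˢ⁾ are independent 1-hashing matrices in ℝ^{m×n}. -/
/-!
Sampling `s` hash positions for each of the `n` columns and sampling `n` column positions for
each of `s` independent 1-hashing matrices are the same experiment: the two sample spaces are
identified by swapping the two arguments, a bijection that preserves the uniform distribution.
Under this identification the two random matrices agree entrywise, since entry `(i, j)` of a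
sum of matrices is the sum of the entries `(i, j)`.
-/

open Matrix BigOperators

theorem PMF.map_equiv_uniformOfFintype {α β : Type*} [Fintype α] [Fintype β] [Nonempty α]
    [Nonempty β] (e : α ≃ β) : (uniformOfFintype α).map e = uniformOfFintype β := by
  ext b
  rw [PMF.map_apply, tsum_eq_single (e.symm b) fun a ha => if_neg fun h => ha (by simp [h])]
  simp [Fintype.card_congr e]

theorem stmt_13 {m n s : ℕ} [NeZero m] :
    PMF.map (fun ω : Fin n → Fin s → Fin m × Bool =>
        Matrix.of (fun i j => (Real.sqrt s)⁻¹ *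
          ∑ k : Fin s, (if i = (ω j k).1 then (if (ω j k).2 then (1 : ℝ) else -1) else 0)))
      (PMF.uniformOfFintype (Fin n → Fin s → Fin m × Bool)) =
    PMF.map (fun ω : Fin s → Fin n → Fin m × Bool =>
        (Real.sqrt s)⁻¹ • ∑ k : Fin s, Matrix.of (fun i j =>
          if i = (ω k j).1 then (if (ω k j).2 then (1 : ℝ) else -1) else 0))
      (PMF.uniformOfFintype (Fin s → Fin n → Fin m × Bool)) := by
  rw [← PMF.map_equiv_uniformOfFintype (Equiv.piComm fun _ _ => Fin m × Bool), PMF.map_comp]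
  congr 1
  funext ω
  ext i j
  simp only [Function.comp_apply, Equiv.piComm_apply, Function.swap, of_apply, Matrix.smul_apply,
    Matrix.sum_apply, smul_eq_mul, Finset.mul_sum]
end

section
/- Suppose m is such that the distribution of 1-hashing matrices S ∈ ℝ^{m×(ns)} is an (ε,δ)-oblivious subspace embedding for every matrix B ∈ ℝ^{(ns)×d} of rank r with coherence μ(B) ≤ μ. Then the distribution of s-hashing variant matrices T ∈ ℝ^{m×n} is an (ε,δ)-oblivious subspace embedding for every matrix A ∈ ℝ^{n×d} of rank r with coherence μ(A) ≤ μ√s. -/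
/-!
An `s`-hashing variant matrix `T` is distributed as `S * Q`, where `S` is a `1`-hashing matrix with
`n * s` columns and `Q = s^{-1/2} [I; …; I]` stacks `s` copies of the identity: this is
`T = s^{-1/2} ∑ₖ S⁽ᵏ⁾` read through the uncurrying `Fin (n * s) ≃ Fin n × Fin s`. Since `Qᵀ Q = 1`,
`S * Q` embeds `A` exactly when `S` embeds `Q * A`, and `Q * A = (Q * U) Σ Vᵀ` is an SVD of a
matrix of the same rank whose left factor has the rows of `U` scaled by `s^{-1/2}`. So the coherence
bound `μ √s` for `A` becomes `μ` for `Q * A`, and the hypothesis applies. For `s = 0` the coherence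
bound forces `A = 0`, and both events are certain.
-/

open Matrix BigOperators

/-- `A` has rank `r` and a compact SVD `A = U Σ Vᵀ` whose left factor `U` has all row
Euclidean norms at most `μ` (i.e. coherence `μ(A) ≤ μ`). -/
def CoherLE {n d : ℕ} (A : Matrix (Fin n) (Fin d) ℝ) (r : ℕ) (μ : ℝ) : Prop :=
  A.rank = r ∧ ∃ (U : Matrix (Fin n) (Fin r) ℝ) (σ : Fin r → ℝ)
    (V : Matrix (Fin d) (Fin r) ℝ),
    Uᵀ * U = 1 ∧ Vᵀ * V = 1 ∧ (∀ i, 0 < σ i) ∧ A = U * Matrix.diagonal σ * Vᵀ ∧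
    ∀ i, Real.sqrt (∑ j, (U i j) ^ 2) ≤ μ

/-- `S` is an `ε`-subspace embedding for `A`. -/
def Embeds {m n d : ℕ} (S : Matrix (Fin m) (Fin n) ℝ) (A : Matrix (Fin n) (Fin d) ℝ)
    (ε : ℝ) : Prop :=
  ∀ x : Fin d → ℝ,
    (1 - ε) * ∑ i, (A.mulVec x i) ^ 2 ≤ ∑ i, (S.mulVec (A.mulVec x) i) ^ 2 ∧
    ∑ i, (S.mulVec (A.mulVec x) i) ^ 2 ≤ (1 + ε) * ∑ i, (A.mulVec x i) ^ 2

/-- The distribution of `1`-hashing matrices in `ℝ^{m×N}`. -/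
noncomputable def oneHashPMF (m N : ℕ) [NeZero m] : PMF (Matrix (Fin m) (Fin N) ℝ) :=
  PMF.map (fun ω => Matrix.of fun i j =>
      if i = (ω j).1 then (if (ω j).2 then (1 : ℝ) else -1) else 0)
    (PMF.uniformOfFintype (Fin N → Fin m × Bool))

/-- The distribution of `s`-hashing variant matrices in `ℝ^{m×n}`. -/
noncomputable def sHashVariantPMF (m n s : ℕ) [NeZero m] :
    PMF (Matrix (Fin m) (Fin n) ℝ) :=
  PMF.map (fun ω : Fin n → Fin s → Fin m × Bool =>
      Matrix.of fun i j => (Real.sqrt s)⁻¹ *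
        ∑ k : Fin s, (if i = (ω j k).1 then (if (ω j k).2 then (1 : ℝ) else -1) else 0))
    (PMF.uniformOfFintype (Fin n → Fin s → Fin m × Bool))

lemma PMF.map_uniformOfFintype_equiv {α β : Type*} [Fintype α] [Fintype β] [Nonempty α]
    [Nonempty β] (e : α ≃ β) :
    (PMF.uniformOfFintype α).map e = PMF.uniformOfFintype β := by
  ext b
  rw [PMF.map_apply, tsum_eq_single (e.symm b)]
  · simp [Fintype.card_congr e]
  · intro a ha
    rw [if_neg (fun h => ha (by simp [h]))]

lemma Matrix.rank_mul_eq_right_of_mul_eq_one {ι κ ν R : Type*} [Fintype ι] [Fintype κ]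
    [Fintype ν] [DecidableEq κ] [CommRing R] [StrongRankCondition R] {L : Matrix κ ι R}
    {M : Matrix ι κ R} (hLM : L * M = 1) (A : Matrix κ ν R) : (M * A).rank = A.rank := by
  refine le_antisymm (rank_mul_le_right _ _) ?_
  calc A.rank = (L * (M * A)).rank := by rw [← Matrix.mul_assoc, hLM, Matrix.one_mul]
    _ ≤ (M * A).rank := rank_mul_le_right _ _

lemma sum_sq_mulVec_of_transpose_mul_self {ι κ : Type*} [Fintype ι] [Fintype κ] [DecidableEq κ]
    {M : Matrix ι κ ℝ} (hM : Mᵀ * M = 1) (y : κ → ℝ) :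
    ∑ i, (M *ᵥ y) i ^ 2 = ∑ i, y i ^ 2 := by
  simp only [sq]
  change (M *ᵥ y) ⬝ᵥ (M *ᵥ y) = y ⬝ᵥ y
  rw [dotProduct_mulVec, ← mulVec_transpose, mulVec_mulVec, hM, one_mulVec]

lemma embeds_mul_iff {m N n d : ℕ} {M : Matrix (Fin N) (Fin n) ℝ} (hM : Mᵀ * M = 1)
    (S : Matrix (Fin m) (Fin N) ℝ) (A : Matrix (Fin n) (Fin d) ℝ) (ε : ℝ) :
    Embeds (S * M) A ε ↔ Embeds S (M * A) ε := by
  simp only [Embeds, ← mulVec_mulVec, sum_sq_mulVec_of_transpose_mul_self hM]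

lemma embeds_zero {m n d : ℕ} (S : Matrix (Fin m) (Fin n) ℝ) (ε : ℝ) :
    Embeds S (0 : Matrix (Fin n) (Fin d) ℝ) ε := by
  simp [Embeds]

lemma CoherLE.eq_zero_of_nonpos {n d r : ℕ} {A : Matrix (Fin n) (Fin d) ℝ} {μ : ℝ}
    (hA : CoherLE A r μ) (hμ : μ ≤ 0) : A = 0 := by
  obtain ⟨-, U, σ, V, -, -, -, rfl, hU⟩ := hA
  have hU0 : U = 0 := by
    ext i j
    have hrow : ∑ j, U i j ^ 2 = 0 :=
      le_antisymm (Real.sqrt_eq_zero'.1 (le_antisymm ((hU i).trans hμ) (Real.sqrt_nonneg _)))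
        (Finset.sum_nonneg fun j _ => sq_nonneg _)
    simpa using (Finset.sum_eq_zero_iff_of_nonneg (fun j _ => sq_nonneg (U i j))).1 hrow j
  simp [hU0]

lemma coherLE_of_fin_zero {d : ℕ} (A : Matrix (Fin 0) (Fin d) ℝ) (μ : ℝ) : CoherLE A 0 μ := by
  have hA : A = 0 := by ext i; exact i.elim0
  refine ⟨by simp [hA], 0, 0, 0, ?_, ?_, fun i => i.elim0, ?_, fun i => i.elim0⟩ <;>
    ext i <;> exact i.elim0

section Stack

variable {n s : ℕ}

def stackedIdentity (R : Type*) [Zero R] [One R] (n s : ℕ) : Matrix (Fin (n * s)) (Fin n) R :=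
  (1 : Matrix (Fin n) (Fin n) R).submatrix (fun i => (finProdFinEquiv.symm i).1) id

lemma stackedIdentity_mul_apply {R ι : Type*} [NonAssocSemiring R] (A : Matrix (Fin n) ι R)
    (i : Fin (n * s)) (x : ι) :
    (stackedIdentity R n s * A) i x = A (finProdFinEquiv.symm i).1 x := by
  simp [stackedIdentity, mul_apply, one_apply]

lemma mul_stackedIdentity_apply {R ι : Type*} [NonAssocSemiring R] (S : Matrix ι (Fin (n * s)) R)
    (i : ι) (j : Fin n) :
    (S * stackedIdentity R n s) i j = ∑ k, S i (finProdFinEquiv (j, k)) := by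
  simp only [mul_apply, stackedIdentity, submatrix_apply]
  rw [← finProdFinEquiv.sum_comp]
  simp only [one_apply, mul_ite, mul_one, mul_zero, Fintype.sum_prod_type]
  rw [Finset.sum_comm]
  simp

lemma stackedIdentity_transpose_mul_self (R : Type*) [NonAssocSemiring R] :
    (stackedIdentity R n s)ᵀ * stackedIdentity R n s = (s : R) • 1 := by
  ext j j'
  rw [mul_stackedIdentity_apply]
  simp only [transpose_apply, stackedIdentity, submatrix_apply]
  simp [one_apply, eq_comm]

noncomputable def normalizedStack (n s : ℕ) : Matrix (Fin (n * s)) (Fin n) ℝ :=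
  (√s)⁻¹ • stackedIdentity ℝ n s

lemma normalizedStack_transpose_mul_self (hs : 0 < s) :
    (normalizedStack n s)ᵀ * normalizedStack n s = 1 := by
  have : (√s)⁻¹ * (√s)⁻¹ * (s : ℝ) = 1 := by
    rw [← mul_inv, Real.mul_self_sqrt s.cast_nonneg, inv_mul_cancel₀ (by positivity)]
  rw [normalizedStack, transpose_smul, Matrix.smul_mul, Matrix.mul_smul,
    stackedIdentity_transpose_mul_self, smul_smul, smul_smul, this, one_smul]

lemma normalizedStack_mul_apply {ι : Type*} (A : Matrix (Fin n) ι ℝ) (i : Fin (n * s)) (x : ι) :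
    (normalizedStack n s * A) i x = (√s)⁻¹ * A (finProdFinEquiv.symm i).1 x := by
  rw [normalizedStack, Matrix.smul_mul, Matrix.smul_apply, stackedIdentity_mul_apply, smul_eq_mul]

lemma CoherLE.normalizedStack_mul {d r : ℕ} {A : Matrix (Fin n) (Fin d) ℝ} {μ : ℝ} (hs : 0 < s)
    (hA : CoherLE A r (μ * √s)) : CoherLE (normalizedStack n s * A) r μ := by
  obtain ⟨hrank, U, σ, V, hU, hV, hσ, rfl, hUrow⟩ := hA
  have hQ := normalizedStack_transpose_mul_self (n := n) hs
  refine ⟨by rw [rank_mul_eq_right_of_mul_eq_one hQ, hrank], normalizedStack n s * U, σ, V, ?_,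
    hV, hσ, by simp only [Matrix.mul_assoc], fun i => ?_⟩
  · rw [transpose_mul, Matrix.mul_assoc, ← Matrix.mul_assoc _ _ U, hQ, Matrix.one_mul, hU]
  · have hc : 0 ≤ (√s)⁻¹ := by positivity
    simp only [normalizedStack_mul_apply, mul_pow, ← Finset.mul_sum]
    rw [Real.sqrt_mul (sq_nonneg _), Real.sqrt_sq hc]
    calc (√s)⁻¹ * √(∑ j, U (finProdFinEquiv.symm i).1 j ^ 2) ≤ (√s)⁻¹ * (μ * √s) :=
          mul_le_mul_of_nonneg_left (hUrow _) hc
      _ = μ := by field_simp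

lemma sHashVariantPMF_eq_map (m : ℕ) [NeZero m] :
    sHashVariantPMF m n s = (oneHashPMF m (n * s)).map (· * normalizedStack n s) := by
  let curry : (Fin (n * s) → Fin m × Bool) ≃ (Fin n → Fin s → Fin m × Bool) :=
    (finProdFinEquiv.arrowCongr (Equiv.refl _)).symm.trans (Equiv.curry _ _ _)
  rw [sHashVariantPMF, ← PMF.map_uniformOfFintype_equiv curry, oneHashPMF, PMF.map_comp,
    PMF.map_comp]
  congr 1
  funext ω
  ext i j
  simp [curry, normalizedStack, mul_stackedIdentity_apply]

end Stack

theorem stmt_14 {m n d s r : ℕ} [NeZero m] (ε δ μ : ℝ)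
    (h1 : ∀ B : Matrix (Fin (n * s)) (Fin d) ℝ, CoherLE B r μ →
      ENNReal.ofReal (1 - δ) ≤
        (oneHashPMF m (n * s)).toOuterMeasure {S | Embeds S B ε}) :
    ∀ A : Matrix (Fin n) (Fin d) ℝ, CoherLE A r (μ * Real.sqrt s) →
      ENNReal.ofReal (1 - δ) ≤
        (sHashVariantPMF m n s).toOuterMeasure {T | Embeds T A ε} := by
  intro A hA
  rcases Nat.eq_zero_or_pos s with rfl | hs
  · obtain rfl : A = 0 := hA.eq_zero_of_nonpos (by simp)
    obtain rfl : r = 0 := by simpa using hA.1.symm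
    have huniv {α : Type} (p : PMF α) : p.toOuterMeasure Set.univ = 1 :=
      (p.toOuterMeasure_apply_eq_one_iff _).2 (Set.subset_univ _)
    simpa [embeds_zero, huniv] using h1 0 (coherLE_of_fin_zero 0 μ)
  · calc ENNReal.ofReal (1 - δ)
        ≤ (oneHashPMF m (n * s)).toOuterMeasure {S | Embeds S (normalizedStack n s * A) ε} :=
          h1 _ (hA.normalizedStack_mul hs)
      _ = (sHashVariantPMF m n s).toOuterMeasure {T | Embeds T A ε} := by
          rw [sHashVariantPMF_eq_map, PMF.toOuterMeasure_map_apply]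
          simp only [Set.preimage_ofPred_eq, embeds_mul_iff (normalizedStack_transpose_mul_self hs)]
end

section
/- Suppose S ∈ ℝ^{m×n} is an ε-subspace embedding for the augmented matrix (A b) with 0 < ε < 1, and let x_s be any minimizer of ‖SAx − Sb‖₂ over x ∈ ℝ^d. Then ‖Ax_s − b‖₂ ≤ ((1+ε)/(1−ε)) ‖Ax* − b‖₂, where x* is any minimizer of ‖Ax − b‖₂. -/
open Matrix BigOperators

theorem mul_le_mul_of_distortion_of_forall_le {X : Type*} {f g : X → ℝ} {ε : ℝ}
    (hlow : ∀ x, (1 - ε) * f x ≤ g x) (hup : ∀ x, g x ≤ (1 + ε) * f x)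
    {xs : X} (hxs : ∀ x, g xs ≤ g x) (x : X) :
    (1 - ε) * f xs ≤ (1 + ε) * f x :=
  (hlow xs).trans ((hxs x).trans (hup x))

theorem sqrt_le_div_mul_sqrt_of_mul_le_mul {ε P Q : ℝ} (hε0 : 0 ≤ ε) (hε1 : ε < 1)
    (hQ : 0 ≤ Q) (h : (1 - ε) * P ≤ (1 + ε) * Q) :
    √P ≤ (1 + ε) / (1 - ε) * √Q := by
  set c := (1 + ε) / (1 - ε)
  have hc : 1 ≤ c := (one_le_div (by linarith)).2 (by linarith)
  have hPc : P ≤ c * Q := by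
    rw [div_mul_eq_mul_div, le_div_iff₀ (by linarith)]
    linarith
  rw [Real.sqrt_le_left (by positivity), mul_pow, Real.sq_sqrt hQ]
  calc P ≤ c * Q := hPc
    _ ≤ c ^ 2 * Q := by gcongr; nlinarith

theorem stmt_17_general {m n d : ℕ} (S : Matrix (Fin m) (Fin n) ℝ)
    (A : Matrix (Fin n) (Fin d) ℝ) (b : Fin n → ℝ) (ε : ℝ)
    (hε0 : 0 < ε) (hε1 : ε < 1)
    (hemb : ∀ (x : Fin d → ℝ) (β : ℝ),
      (1 - ε) * ∑ i, (A.mulVec x i - β * b i) ^ 2 ≤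
        ∑ i, (S.mulVec (A.mulVec x - β • b) i) ^ 2 ∧
      ∑ i, (S.mulVec (A.mulVec x - β • b) i) ^ 2 ≤
        (1 + ε) * ∑ i, (A.mulVec x i - β * b i) ^ 2)
    (xs : Fin d → ℝ)
    (hxs : ∀ x : Fin d → ℝ,
      ∑ i, (S.mulVec (A.mulVec xs - b) i) ^ 2 ≤ ∑ i, (S.mulVec (A.mulVec x - b) i) ^ 2)
    (xstar : Fin d → ℝ) :
    Real.sqrt (∑ i, (A.mulVec xs i - b i) ^ 2) ≤
      ((1 + ε) / (1 - ε)) * Real.sqrt (∑ i, (A.mulVec xstar i - b i) ^ 2) := by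
  have hemb₁ := fun x => hemb x 1
  simp only [one_smul, one_mul] at hemb₁
  have hsq := mul_le_mul_of_distortion_of_forall_le (fun x => (hemb₁ x).1) (fun x => (hemb₁ x).2)
    hxs xstar
  exact sqrt_le_div_mul_sqrt_of_mul_le_mul hε0.le hε1 (by positivity) hsq

theorem stmt_17 {m n d : ℕ} (S : Matrix (Fin m) (Fin n) ℝ)
    (A : Matrix (Fin n) (Fin d) ℝ) (b : Fin n → ℝ) (ε : ℝ)
    (hε0 : 0 < ε) (hε1 : ε < 1)
    (hemb : ∀ (x : Fin d → ℝ) (β : ℝ),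
      (1 - ε) * ∑ i, (A.mulVec x i - β * b i) ^ 2 ≤
        ∑ i, (S.mulVec (A.mulVec x - β • b) i) ^ 2 ∧
      ∑ i, (S.mulVec (A.mulVec x - β • b) i) ^ 2 ≤
        (1 + ε) * ∑ i, (A.mulVec x i - β * b i) ^ 2)
    (xs : Fin d → ℝ)
    (hxs : ∀ x : Fin d → ℝ,
      ∑ i, (S.mulVec (A.mulVec xs - b) i) ^ 2 ≤ ∑ i, (S.mulVec (A.mulVec x - b) i) ^ 2)
    (xstar : Fin d → ℝ)
    (hxstar : ∀ x : Fin d → ℝ,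
      ∑ i, (A.mulVec xstar i - b i) ^ 2 ≤ ∑ i, (A.mulVec x i - b i) ^ 2) :
    Real.sqrt (∑ i, (A.mulVec xs i - b i) ^ 2) ≤
      ((1 + ε) / (1 - ε)) * Real.sqrt (∑ i, (A.mulVec xstar i - b i) ^ 2) :=
  stmt_17_general S A b ε hε0 hε1 hemb xs hxs xstar
end
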